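/- arXiv:2501.14874 — 2 statements merged into one kernel-verified Lean document; each statement's English description precedes it below -/
import Mathlib

section
/- Let $\{Z_n\}_n$ be a sequence of complex matrices with $Z_n \in \mathbb{C}^{sn\times tn}$, and fix $p \ge 1$. If the $p$-th power of the Schatten $p$-norm satisfies $\|Z_n\|_p^p = o(n)$ as $n \to \infty$, then $\{Z_n\}_n$ is zero-distributed in the sense of singular values. -/
/-!
Markov's inequality bounds the number of singular values of `Zₙ` that are at least `δ` by
`‖Zₙ‖ₚᵖ / δᵖ = o(n)`. As `F` is continuous at `0` and bounded, all but `o(n)` of the terms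
`F (σⱼ(Zₙ))` are then close to `F 0`, and the others are bounded by `2 sup ‖F‖`.
-/

open Filter Finset Matrix Topology MeasureTheory

/-- The (unsorted) singular values of a complex matrix: square roots of the
eigenvalues of `Aᴴ * A`. -/
noncomputable def svals {m n : Type*} [Fintype m] [Fintype n] [DecidableEq n]
    (A : Matrix m n ℂ) (i : n) : ℝ :=
  Real.sqrt ((Matrix.isHermitian_conjTranspose_mul_self A).eigenvalues i)

/-- Singular values of a `Fin p × Fin q`-indexed complex matrix, arranged in
non-increasing order and indexed by `ℕ` (zero for indices `≥ q`); so
`svalFun A 0` is the largest singular value `σ₁(A)`. -/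
noncomputable def svalFun {p q : ℕ} (A : Matrix (Fin p) (Fin q) ℂ) (j : ℕ) : ℝ :=
  if h : j < q then svals A (Tuple.sort (svals A) ((⟨j, h⟩ : Fin q).rev)) else 0

/-- The spectral norm of a complex matrix: its largest singular value. -/
noncomputable def specNorm {m n : Type*} [Fintype m] [Fintype n] [DecidableEq n]
    (A : Matrix m n ℂ) : ℝ :=
  ⨆ i, svals A i

lemma svalFun_nonneg {a b : ℕ} (A : Matrix (Fin a) (Fin b) ℂ) (j : ℕ) :
    0 ≤ svalFun A j := by
  unfold svalFun
  split
  · exact Real.sqrt_nonneg _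
  · exact le_rfl

lemma sum_range_svalFun_rpow_le {a b : ℕ} (A : Matrix (Fin a) (Fin b) ℂ) (p : ℝ)
    {N : ℕ} (hN : N ≤ b) :
    ∑ j ∈ range N, svalFun A j ^ p ≤ ∑ i : Fin b, svals A i ^ p := by
  have hsorted : ∀ i : Fin b, svalFun A i ^ p
      = svals A ((Fin.revPerm.trans (Tuple.sort (svals A))) i) ^ p := fun i => by
    simp only [svalFun, i.isLt, dif_pos, Fin.eta, Equiv.trans_apply, Fin.revPerm_apply]
  calc ∑ j ∈ range N, svalFun A j ^ p
      ≤ ∑ j ∈ range b, svalFun A j ^ p :=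
        sum_le_sum_of_subset_of_nonneg (range_subset_range.2 hN)
          fun j _ _ => Real.rpow_nonneg (svalFun_nonneg A j) p
    _ = ∑ i : Fin b, svals A i ^ p := by
        rw [sum_range, sum_congr rfl fun i _ => hsorted i]
        exact Equiv.sum_comp _ fun i => svals A i ^ p

lemma card_filter_nsmul_le_sum {ι M : Type*} [AddCommMonoid M] [PartialOrder M]
    [IsOrderedAddMonoid M] {s : Finset ι} {P : ι → Prop} [DecidablePred P] {f : ι → M} {a : M}
    (hf : ∀ i ∈ s, 0 ≤ f i) (hP : ∀ i ∈ s, P i → a ≤ f i) :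
    #(s.filter P) • a ≤ ∑ i ∈ s, f i :=
  calc #(s.filter P) • a
      ≤ ∑ i ∈ s.filter P, f i :=
        card_nsmul_le_sum _ _ _ fun i hi => hP i (mem_filter.1 hi).1 (mem_filter.1 hi).2
    _ ≤ ∑ i ∈ s, f i := sum_le_sum_of_subset_of_nonneg (filter_subset _ _) fun i hi _ => hf i hi

lemma card_svalFun_ge_mul_rpow_le {a b : ℕ} (A : Matrix (Fin a) (Fin b) ℂ) {p δ : ℝ}
    (hp : 0 ≤ p) (hδ : 0 ≤ δ) {N : ℕ} (hN : N ≤ b) :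
    #((range N).filter fun j => δ ≤ svalFun A j) * δ ^ p ≤ ∑ i : Fin b, svals A i ^ p := by
  rw [← nsmul_eq_mul]
  refine le_trans ?_ (sum_range_svalFun_rpow_le A p hN)
  exact card_filter_nsmul_le_sum (fun j _ => Real.rpow_nonneg (svalFun_nonneg A j) p)
    fun j _ hj => Real.rpow_le_rpow hδ hj hp

theorem tendsto_average_of_tendsto_card_ge_div {E : Type*} [NormedAddCommGroup E]
    [NormedSpace ℝ E] {F : ℝ → E} {C : ℝ} (hF : ContinuousAt F 0) (hC : ∀ y, ‖F y‖ ≤ C)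
    {N : ℕ → ℕ} {x : ℕ → ℕ → ℝ} (hx : ∀ n j, 0 ≤ x n j) (hN : ∀ᶠ n in atTop, 0 < N n)
    (hlarge : ∀ δ > 0,
      Tendsto (fun n => (#((range (N n)).filter fun j => δ ≤ x n j) : ℝ) / N n) atTop (𝓝 0)) :
    Tendsto (fun n => (1 / (N n : ℝ)) • ∑ j ∈ range (N n), F (x n j)) atTop (𝓝 (F 0)) := by
  rw [Metric.tendsto_nhds]
  intro ε hε
  obtain ⟨δ, hδ, hFδ⟩ := Metric.continuousAt_iff.mp hF (ε / 2) (half_pos hε)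
  have hpoint : ∀ y, 0 ≤ y → ‖F y - F 0‖ ≤ ε / 2 + 2 * C * if δ ≤ y then 1 else 0 := by
    intro y hy
    split_ifs with hyδ
    · linarith [norm_sub_le (F y) (F 0), hC y, hC 0]
    · have hclose : dist (F y) (F 0) < ε / 2 :=
        hFδ (by rwa [Real.dist_0_eq_abs, abs_of_nonneg hy, ← not_le])
      rw [dist_eq_norm] at hclose
      linarith
  have hsmall : Tendsto
      (fun n => 2 * C * ((#((range (N n)).filter fun j => δ ≤ x n j) : ℝ) / N n)) atTop (𝓝 0) := by simpa using (hlarge δ hδ).const_mul (2 * C)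
  filter_upwards [hN, hsmall.eventually (gt_mem_nhds (half_pos hε))] with n hNn hfrac
  have hNR : (0 : ℝ) < N n := Nat.cast_pos.2 hNn
  have hcentre : (1 / (N n : ℝ)) • ∑ j ∈ range (N n), F (x n j) - F 0
      = (1 / (N n : ℝ)) • ∑ j ∈ range (N n), (F (x n j) - F 0) := by
    rw [sum_sub_distrib, sum_const, card_range, smul_sub, ← Nat.cast_smul_eq_nsmul ℝ, smul_smul,
      one_div_mul_cancel hNR.ne', one_smul]
  calc dist ((1 / (N n : ℝ)) • ∑ j ∈ range (N n), F (x n j)) (F 0)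
      = 1 / N n * ‖∑ j ∈ range (N n), (F (x n j) - F 0)‖ := by
        rw [dist_eq_norm, hcentre, norm_smul, Real.norm_of_nonneg (by positivity)]
    _ ≤ 1 / N n * ∑ j ∈ range (N n), (ε / 2 + 2 * C * if δ ≤ x n j then 1 else 0) := by
        gcongr
        exact (norm_sum_le _ _).trans (sum_le_sum fun j _ => hpoint _ (hx n j))
    _ = ε / 2 + 2 * C * ((#((range (N n)).filter fun j => δ ≤ x n j) : ℝ) / N n) := by
        rw [sum_add_distrib, ← mul_sum, sum_boole, sum_const, card_range, nsmul_eq_mul]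
        field_simp
    _ < ε := by linarith

/-- if the `p`-th power of the Schatten `p`-norm of `Zₙ` is `o(n)`,
then `{Zₙ}ₙ` is zero-distributed in the sense of the singular values. -/
theorem zero_distributed_of_schatten_small (s t : ℕ) (hs : 0 < s) (ht : 0 < t)
    (p : ℝ) (hp : 1 ≤ p)
    (Z : (n : ℕ) → Matrix (Fin (s * n)) (Fin (t * n)) ℂ)
    (hSch : Tendsto (fun n => (∑ i : Fin (t * n), svals (Z n) i ^ p) / n) atTop (nhds 0)) :
    ∀ F : ℝ → ℂ, Continuous F → HasCompactSupport F →
      Tendsto (fun n => (1 / ((min s t * n : ℕ) : ℝ)) •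
          ∑ j ∈ Finset.range (min s t * n), F (svalFun (Z n) j))
        atTop (nhds (F 0)) := by
  intro F hF hFc
  obtain ⟨C, hC⟩ := hFc.exists_bound_of_continuous hF
  have hr : 0 < min s t := lt_min hs ht
  refine tendsto_average_of_tendsto_card_ge_div hF.continuousAt hC
    (fun n => svalFun_nonneg (Z n)) ((eventually_gt_atTop 0).mono fun n hn => Nat.mul_pos hr hn)
    fun δ hδ => ?_
  have hδp : 0 < δ ^ p := Real.rpow_pos_of_pos hδ p
  refine squeeze_zero (fun n => by positivity) (fun n => ?_)
    (by simpa using hSch.div_const (δ ^ p * min s t))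
  have hmarkov := card_svalFun_ge_mul_rpow_le (Z n) (zero_le_one.trans hp) hδ.le
    (Nat.mul_le_mul_right n (min_le_right s t))
  calc _ ≤ (∑ i : Fin (t * n), svals (Z n) i ^ p) / δ ^ p / ((min s t * n : ℕ) : ℝ) :=
        div_le_div_of_nonneg_right ((le_div_iff₀ hδp).2 hmarkov) (Nat.cast_nonneg _)
    _ = _ := by push_cast; ring
end

section
/- Let $\{A_n\}_n$ and $\{S_n\}_n$ be sequences of matrices with $A_n, S_n \in \mathbb{C}^{d_n\times d_n}$, $S_n$ invertible, such that: (i) $\{S_n - A_n\}_n$ is zero-distributed; (ii) $\|S_n^{-1}\|$ is uniformly bounded; (iii) $\|A_n\|$ and $\|S_n\|$ are uniformly bounded. Then the singular values of $S_n^{-1}A_n$ are weakly clustered at $1$: writing $S_n^{-1}A_n = I + S_n^{-1}(A_n - S_n)$, for every $\epsilon > 0$ the number of singular values of $S_n^{-1}A_n$ outside $[1-\epsilon, 1+\epsilon]$ is $o(d_n)$. -/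
/-! Write `Mₙ = Sₙ⁻¹Aₙ` and `Zₙ = Sₙ - Aₙ`, so that `Mₙ - I = -Sₙ⁻¹Zₙ`. The squares of the
singular values of `Mₙ` are the eigenvalues of `MₙᴴMₙ`, and `|σ - 1| ≤ |σ² - 1|`, so a Chebyshev
count gives `ε² #{i : |σᵢ(Mₙ) - 1| > ε} ≤ ‖MₙᴴMₙ - I‖_F²`. Since
`MₙᴴMₙ - I = Mₙᴴ(Mₙ - I) + (Mₙ - I)ᴴ`, this is at most `((‖Mₙ‖ + 1)‖Sₙ⁻¹‖)² ‖Zₙ‖_F²`, with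
spectral norms `‖·‖` bounded uniformly in `n`. Finally `‖Zₙ‖_F² = ∑ⱼ σⱼ(Zₙ)²`, and as the `σⱼ(Zₙ)`
are uniformly bounded this is `∑ⱼ F(σⱼ(Zₙ))` for one continuous compactly supported `F` with
`F(0) = 0`; zero-distribution makes its average over `j` tend to `0`. -/

open Filter Finset Matrix Topology MeasureTheory

section L2OpNorm

open scoped Matrix.Norms.L2Operator

variable {𝕜 : Type*} [RCLike 𝕜] {l m n : Type*} [Fintype l] [Fintype m] [Fintype n]

theorem Matrix.IsHermitian.l2_opNorm_eq [DecidableEq n] {A : Matrix n n 𝕜}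
    (hA : A.IsHermitian) : ‖A‖ = ‖hA.eigenvalues‖ := by
  conv_lhs => rw [hA.spectral_theorem, Unitary.conjStarAlgAut_apply, ← Unitary.coe_star]
  rw [CStarRing.norm_mul_coe_unitary, CStarRing.norm_coe_unitary_mul, l2_opNorm_diagonal]
  simp [Pi.norm_def, Function.comp_def]

theorem svals_sq [DecidableEq n] (A : Matrix m n ℂ) (i : n) :
    svals A i ^ 2 = (isHermitian_conjTranspose_mul_self A).eigenvalues i :=
  Real.sq_sqrt (eigenvalues_conjTranspose_mul_self_nonneg A i)

theorem svals_le_specNorm [DecidableEq n] (A : Matrix m n ℂ) (i : n) : svals A i ≤ specNorm A :=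
  le_ciSup (Set.finite_range _).bddAbove i

theorem specNorm_eq_l2_opNorm [DecidableEq n] (A : Matrix m n ℂ) : specNorm A = ‖A‖ := by
  have hH := isHermitian_conjTranspose_mul_self A
  have hsq : ‖A‖ ^ 2 = ‖hH.eigenvalues‖ := by
    rw [sq, ← l2_opNorm_conjTranspose_mul_self, hH.l2_opNorm_eq]
  have hnonneg : 0 ≤ specNorm A := Real.iSup_nonneg fun _ => Real.sqrt_nonneg _
  refine le_antisymm (Real.iSup_le (fun i => ?_) (norm_nonneg _)) ?_
  · refine (pow_le_pow_iff_left₀ (Real.sqrt_nonneg _) (norm_nonneg A) two_ne_zero).mp ?_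
    rw [← svals, svals_sq, hsq]
    exact (Real.le_norm_self _).trans (norm_le_pi_norm hH.eigenvalues i)
  · refine (pow_le_pow_iff_left₀ (norm_nonneg A) hnonneg two_ne_zero).mp ?_
    rw [hsq, pi_norm_le_iff_of_nonneg (by positivity)]
    intro i
    rw [Real.norm_of_nonneg (eigenvalues_conjTranspose_mul_self_nonneg A i), ← svals_sq]
    exact pow_le_pow_left₀ (Real.sqrt_nonneg _) (svals_le_specNorm A i) 2

theorem specNorm_nonneg [DecidableEq n] (A : Matrix m n ℂ) : 0 ≤ specNorm A :=
  specNorm_eq_l2_opNorm A ▸ norm_nonneg A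

theorem specNorm_mul_le [DecidableEq m] [DecidableEq n] (A : Matrix l m ℂ) (B : Matrix m n ℂ) :
    specNorm (A * B) ≤ specNorm A * specNorm B := by
  simpa only [specNorm_eq_l2_opNorm] using Matrix.l2_opNorm_mul A B

theorem specNorm_sub_le [DecidableEq n] (A B : Matrix m n ℂ) :
    specNorm (A - B) ≤ specNorm A + specNorm B := by
  simpa only [specNorm_eq_l2_opNorm] using norm_sub_le A B

theorem specNorm_conjTranspose [DecidableEq m] [DecidableEq n] (A : Matrix m n ℂ) :
    specNorm Aᴴ = specNorm A := by
  simp only [specNorm_eq_l2_opNorm, Matrix.l2_opNorm_conjTranspose]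

theorem norm_mulVec_le_specNorm [DecidableEq n] (A : Matrix m n ℂ) (x : EuclideanSpace ℂ n) :
    ‖WithLp.toLp 2 (A *ᵥ x)‖ ≤ specNorm A * ‖x‖ :=
  specNorm_eq_l2_opNorm A ▸ A.l2_opNorm_mulVec x

end L2OpNorm

section Frobenius

open scoped Matrix.Norms.Frobenius

variable {𝕜 : Type*} [RCLike 𝕜] {l m n : Type*} [Fintype l] [Fintype m] [Fintype n]

theorem Matrix.frobenius_norm_sq_eq_sum_rows (A : Matrix m n 𝕜) :
    ‖A‖ ^ 2 = ∑ i, ‖WithLp.toLp 2 (A i)‖ ^ 2 :=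
  PiLp.norm_sq_eq_of_L2 _ (WithLp.toLp 2 fun i => WithLp.toLp 2 (A i))

theorem Matrix.frobenius_norm_sq_eq_re_trace (A : Matrix m n 𝕜) :
    ‖A‖ ^ 2 = RCLike.re (Aᴴ * A).trace := by
  rw [trace_mul_comm, frobenius_norm_sq_eq_sum_rows]
  simp [EuclideanSpace.norm_sq_eq, Matrix.trace, Matrix.mul_apply, RCLike.mul_conj]

theorem Matrix.IsHermitian.trace_cfc [DecidableEq n] {A : Matrix n n 𝕜} (hA : A.IsHermitian)
    (f : ℝ → ℝ) : (cfc f A).trace = ∑ i, (f (hA.eigenvalues i) : 𝕜) := by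
  rw [hA.cfc_eq, IsHermitian.cfc, Unitary.conjStarAlgAut_apply, trace_mul_cycle,
    hA.eigenvectorUnitary.prop.1, one_mul, trace_diagonal]
  rfl

theorem Matrix.IsHermitian.frobenius_norm_sq_cfc [DecidableEq n] {A : Matrix n n 𝕜}
    (hA : A.IsHermitian) (f : ℝ → ℝ) : ‖cfc f A‖ ^ 2 = ∑ i, f (hA.eigenvalues i) ^ 2 := by
  have hf := A.finite_real_spectrum.continuousOn f
  rw [frobenius_norm_sq_eq_re_trace, ← star_eq_conjTranspose, (IsSelfAdjoint.cfc (f := f)).star_eq,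
    ← cfc_mul f f A hf hf, hA.trace_cfc]
  simp [sq]

theorem Matrix.IsHermitian.frobenius_norm_sq_sub_one [DecidableEq n] {A : Matrix n n 𝕜}
    (hA : A.IsHermitian) : ‖A - 1‖ ^ 2 = ∑ i, (hA.eigenvalues i - 1) ^ 2 := by
  have hshift : A - 1 = cfc (fun x : ℝ => x - 1) A := by
    rw [cfc_sub .., cfc_id' .., cfc_const_one ..]
  rw [hshift, hA.frobenius_norm_sq_cfc]

theorem frobenius_norm_sq_eq_sum_svals_sq [DecidableEq n] (A : Matrix m n ℂ) :
    ‖A‖ ^ 2 = ∑ i, svals A i ^ 2 := by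
  simp [frobenius_norm_sq_eq_re_trace,
    (isHermitian_conjTranspose_mul_self A).trace_eq_sum_eigenvalues, svals_sq]

theorem frobenius_norm_mul_le_specNorm [DecidableEq m] (A : Matrix l m ℂ) (B : Matrix m n ℂ) :
    ‖A * B‖ ≤ specNorm A * ‖B‖ := by
  rw [← frobenius_norm_transpose (A * B), ← frobenius_norm_transpose B]
  refine (pow_le_pow_iff_left₀ (norm_nonneg _)
    (mul_nonneg (specNorm_nonneg A) (norm_nonneg _)) two_ne_zero).mp ?_
  rw [mul_pow, frobenius_norm_sq_eq_sum_rows, frobenius_norm_sq_eq_sum_rows, Finset.mul_sum]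
  gcongr with j
  rw [transpose_mul, mul_apply_eq_vecMul, vecMul_transpose, ← mul_pow]
  exact pow_le_pow_left₀ (norm_nonneg _) (norm_mulVec_le_specNorm A (WithLp.toLp 2 (Bᵀ j))) 2

theorem abs_sub_one_le_abs_sq_sub_one {x : ℝ} (hx : 0 ≤ x) : |x - 1| ≤ |x ^ 2 - 1| := by
  rw [show x ^ 2 - 1 = (x - 1) * (x + 1) by ring, abs_mul]
  exact le_mul_of_one_le_right (abs_nonneg _) (by rw [abs_of_nonneg (by linarith)]; linarith)

theorem sq_mul_card_svals_far_from_one_le [DecidableEq n] (M : Matrix n n ℂ) {ε : ℝ} (hε : 0 ≤ ε) :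
    ε ^ 2 * #{i | ε < |svals M i - 1|} ≤ ‖Mᴴ * M - 1‖ ^ 2 := by
  set hH := isHermitian_conjTranspose_mul_self M
  have hfar : ∀ i ∈ ({i | ε < |svals M i - 1|} : Finset n), ε ^ 2 ≤ (hH.eigenvalues i - 1) ^ 2 := by
    intro i hi
    have hσ : |svals M i - 1| ≤ |hH.eigenvalues i - 1| :=
      svals_sq M i ▸ abs_sub_one_le_abs_sq_sub_one (Real.sqrt_nonneg _)
    rw [← sq_abs (hH.eigenvalues i - 1)]
    exact pow_le_pow_left₀ hε ((mem_filter.mp hi).2.le.trans hσ) 2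
  rw [hH.frobenius_norm_sq_sub_one, mul_comm, ← nsmul_eq_mul]
  exact (card_nsmul_le_sum _ _ _ hfar).trans
    (sum_le_sum_of_subset_of_nonneg (filter_subset _ _) fun i _ _ => sq_nonneg _)

theorem frobenius_norm_conjTranspose_mul_self_sub_one_le [DecidableEq n] (M : Matrix n n ℂ) :
    ‖Mᴴ * M - 1‖ ≤ (specNorm M + 1) * ‖M - 1‖ := by
  have hsplit : Mᴴ * M - 1 = Mᴴ * (M - 1) + (M - 1)ᴴ := by
    rw [conjTranspose_sub, conjTranspose_one, mul_sub, mul_one]; abel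
  calc ‖Mᴴ * M - 1‖ ≤ ‖Mᴴ * (M - 1)‖ + ‖(M - 1)ᴴ‖ := hsplit ▸ norm_add_le _ _
    _ ≤ specNorm Mᴴ * ‖M - 1‖ + ‖M - 1‖ := by
      rw [frobenius_norm_conjTranspose]; gcongr; exact frobenius_norm_mul_le_specNorm _ _
    _ = (specNorm M + 1) * ‖M - 1‖ := by rw [specNorm_conjTranspose]; ring

theorem card_svals_inv_mul_far_from_one_le [DecidableEq n] (S A : Matrix n n ℂ) (hS : IsUnit S)
    {ε C₁ C₂ : ℝ} (hε : 0 < ε) (hS₁ : specNorm S⁻¹ ≤ C₁) (hM₂ : specNorm (S⁻¹ * A) ≤ C₂) :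
    (#{i | ε < |svals (S⁻¹ * A) i - 1|} : ℝ) ≤
      ((C₂ + 1) * C₁ / ε) ^ 2 * ∑ i, svals (S - A) i ^ 2 := by
  have hdiff : S⁻¹ * A - 1 = S⁻¹ * (A - S) := by
    rw [Matrix.mul_sub, nonsing_inv_mul _ ((isUnit_iff_isUnit_det _).mp hS)]
  have hM := specNorm_nonneg (S⁻¹ * A)
  rw [← frobenius_norm_sq_eq_sum_svals_sq, div_pow, div_mul_eq_mul_div,
    le_div_iff₀' (pow_pos hε 2), ← mul_pow]
  refine (sq_mul_card_svals_far_from_one_le _ hε.le).trans (pow_le_pow_left₀ (norm_nonneg _) ?_ 2)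
  calc ‖(S⁻¹ * A)ᴴ * (S⁻¹ * A) - 1‖ ≤ (specNorm (S⁻¹ * A) + 1) * ‖S⁻¹ * (A - S)‖ :=
        hdiff ▸ frobenius_norm_conjTranspose_mul_self_sub_one_le _
    _ ≤ (C₂ + 1) * (C₁ * ‖S - A‖) := by
        rw [norm_sub_rev S A]
        refine mul_le_mul (by linarith) ?_ (norm_nonneg _) (by linarith)
        exact (frobenius_norm_mul_le_specNorm _ _).trans (by gcongr)
    _ = (C₂ + 1) * C₁ * ‖S - A‖ := by ring

end Frobenius

theorem sum_range_svalFun {p q : ℕ} (X : Matrix (Fin p) (Fin q) ℂ) {M : Type*}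
    [AddCommMonoid M] (g : ℝ → M) :
    ∑ j ∈ range q, g (svalFun X j) = ∑ i, g (svals X i) := by
  rw [sum_range fun j => g (svalFun X j)]
  have hsort (j : Fin q) : svalFun X j = svals X (Tuple.sort (svals X) j.rev) := by
    rw [svalFun, dif_pos j.isLt]
  simp only [hsort]
  exact Fintype.sum_equiv (Fin.revPerm.trans (Tuple.sort (svals X))) _ _ fun _ => rfl

theorem card_filter_range_svalFun {p q : ℕ} (X : Matrix (Fin p) (Fin q) ℂ) (P : ℝ → Prop)
    [DecidablePred P] : #{j ∈ range q | P (svalFun X j)} = #{i | P (svals X i)} := by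
  simp only [card_filter]
  exact sum_range_svalFun X fun x => if P x then 1 else 0

theorem exists_continuous_hasCompactSupport_eq_sq (C : ℝ) :
    ∃ F : ℝ → ℝ, Continuous F ∧ HasCompactSupport F ∧ ∀ x, |x| ≤ C → F x = x ^ 2 := by
  obtain ⟨f, hf1, -, hfs, -⟩ :=
    exists_continuous_one_zero_of_isCompact (isCompact_Icc (a := -C) (b := C)) isClosed_empty
      (Set.disjoint_empty _)
  refine ⟨(· ^ 2) * ⇑f, by fun_prop, hfs.mul_left, fun x hx => ?_⟩
  rw [Pi.mul_apply, hf1 (abs_le.mp hx), Pi.one_apply, mul_one]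

/-- Singular values distributed as the zero function, the test-function form of
`Zₙ = Rₙ + Nₙ` with `rank Rₙ = o(dₙ)` and `‖Nₙ‖ → 0`. -/
def ZeroDistributed (d : ℕ → ℕ) (Z : (n : ℕ) → Matrix (Fin (d n)) (Fin (d n)) ℂ) : Prop :=
  ∀ F : ℝ → ℂ, Continuous F → HasCompactSupport F →
    Tendsto (fun n => (1 / (d n : ℝ)) • ∑ j ∈ range (d n), F (svalFun (Z n) j)) atTop (𝓝 (F 0))

theorem ZeroDistributed.tendsto_sum_svals_sq_div {d : ℕ → ℕ}
    {Z : (n : ℕ) → Matrix (Fin (d n)) (Fin (d n)) ℂ} (hZ : ZeroDistributed d Z) {C : ℝ}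
    (hC : ∀ n, specNorm (Z n) ≤ C) :
    Tendsto (fun n => (∑ i, svals (Z n) i ^ 2) / d n) atTop (𝓝 0) := by
  obtain ⟨F, hFc, hFs, hF⟩ := exists_continuous_hasCompactSupport_eq_sq C
  have hsum n : ∑ j ∈ range (d n), F (svalFun (Z n) j) = ∑ i, svals (Z n) i ^ 2 := by
    rw [sum_range_svalFun]
    exact sum_congr rfl fun i _ =>
      hF _ ((abs_of_nonneg (Real.sqrt_nonneg _)).trans_le ((svals_le_specNorm _ i).trans (hC n)))
  have h := hZ (fun x => (F x : ℂ)) (by fun_prop) (hFs.comp_left Complex.ofReal_zero)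
  rw [← tendsto_ofReal_iff]
  simpa [hF 0 (by simpa using (specNorm_nonneg _).trans (hC 0)), ← hsum, div_eq_inv_mul] using h

theorem precond_singular_values_cluster_one_general (d : ℕ → ℕ)
    (A S : (n : ℕ) → Matrix (Fin (d n)) (Fin (d n)) ℂ)
    (hinv : ∀ n, IsUnit (S n))
    (hzd : ∀ F : ℝ → ℂ, Continuous F → HasCompactSupport F →
      Tendsto (fun n => (1 / (d n : ℝ)) •
          ∑ j ∈ Finset.range (d n), F (svalFun (S n - A n) j))
        atTop (nhds (F 0)))
    (hSinv : ∃ C : ℝ, ∀ n, specNorm ((S n)⁻¹) ≤ C)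
    (hAb : ∃ C : ℝ, ∀ n, specNorm (A n) ≤ C)
    (hSb : ∃ C : ℝ, ∀ n, specNorm (S n) ≤ C) :
    ∀ ε : ℝ, 0 < ε →
      Tendsto (fun n =>
          (((Finset.range (d n)).filter
              (fun j => ε < |svalFun ((S n)⁻¹ * A n) j - 1|)).card : ℝ) / d n)
        atTop (nhds 0) := by
  obtain ⟨C₁, hC₁⟩ := hSinv
  obtain ⟨C₂, hC₂⟩ := hAb
  obtain ⟨C₃, hC₃⟩ := hSb
  intro ε hε
  have hM n : specNorm ((S n)⁻¹ * A n) ≤ C₁ * C₂ :=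
    (specNorm_mul_le _ _).trans
      (mul_le_mul (hC₁ n) (hC₂ n) (specNorm_nonneg _) ((specNorm_nonneg _).trans (hC₁ 0)))
  have hfrob := ZeroDistributed.tendsto_sum_svals_sq_div (Z := fun n => S n - A n) hzd
    fun n => (specNorm_sub_le _ _).trans (add_le_add (hC₃ n) (hC₂ n))
  refine squeeze_zero (fun n => by positivity) (fun n => ?_)
    (by simpa using hfrob.const_mul (((C₁ * C₂ + 1) * C₁ / ε) ^ 2))
  rw [card_filter_range_svalFun _ fun x => ε < |x - 1|, mul_div_assoc']
  gcongr
  exact card_svals_inv_mul_far_from_one_le _ _ (hinv n) hε (hC₁ n) (hM n)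

/-- if `{Sₙ - Aₙ}ₙ` is zero-distributed, `Sₙ` is invertible and
`‖Sₙ⁻¹‖, ‖Aₙ‖, ‖Sₙ‖` are uniformly bounded, then the singular values of
`Sₙ⁻¹ Aₙ` are weakly clustered at `1`. -/
theorem precond_singular_values_cluster_one (d : ℕ → ℕ)
    (hd : Tendsto d atTop atTop)
    (A S : (n : ℕ) → Matrix (Fin (d n)) (Fin (d n)) ℂ)
    (hinv : ∀ n, IsUnit (S n))
    (hzd : ∀ F : ℝ → ℂ, Continuous F → HasCompactSupport F →
      Tendsto (fun n => (1 / (d n : ℝ)) •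
          ∑ j ∈ Finset.range (d n), F (svalFun (S n - A n) j))
        atTop (nhds (F 0)))
    (hSinv : ∃ C : ℝ, ∀ n, specNorm ((S n)⁻¹) ≤ C)
    (hAb : ∃ C : ℝ, ∀ n, specNorm (A n) ≤ C)
    (hSb : ∃ C : ℝ, ∀ n, specNorm (S n) ≤ C) :
    ∀ ε : ℝ, 0 < ε →
      Tendsto (fun n =>
          (((Finset.range (d n)).filter
              (fun j => ε < |svalFun ((S n)⁻¹ * A n) j - 1|)).card : ℝ) / d n)
        atTop (nhds 0) :=
  precond_singular_values_cluster_one_general d A S hinv hzd hSinv hAb hSb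
end
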